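/- arXiv:math/9805063 — 3 statements merged into one kernel-verified Lean document; each statement's English description precedes it below -/
import Mathlib

section
/- Let (A,H,D) be a p-summable spectral triple with D invertible, i.e. [D,a] is bounded for all a ∈ A and (1+D²)^{-p/2} is trace class. Then with F = sign D, the commutator [F,a] lies in the Schatten class L^p(H) for every a ∈ A. -/
/-!
In the eigenbasis `b` of `D`, the matrix entries of `T = [F, a]` vanish between eigenvectors
whose eigenvalues have the same sign, and between opposite signs they equal
`2 ⟪[D,a] bₘ, bₙ⟫ / (|dₘ| + |dₙ|)`. Writing `1 / (λ + μ) = ∫₀^∞ e^{-(λ + μ) s} ds` shows that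
this Schur multiplier has norm at most `1 / (2R)` on the modes with `|d| ≥ R`. So the
compression of `T` to the orthogonal complement of the `N(R) = #{n | |dₙ| < R}` low modes has
norm at most `2 ‖[D,a]‖ / R`, which gives the singular value bound `s_{2 N(R)}(T) ≤ 2 ‖[D,a]‖ / R`.
Summing it over the dyadic shells `δ 2ʲ ≤ |dₙ| < δ 2ʲ⁺¹` bounds `∑ sₘ(T)^p` by a multiple of
`∑ |dₙ|^{-p}`, which is finite by `p`-summability.
-/

open ContinuousLinearMap Filter
open scoped InnerProductSpace

/-- The `m`-th singular value (approximation number) of an operator `T` on a Hilbert space: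
the distance of `T` to the operators of rank at most `m`.  For a compact operator this is the
`m`-th eigenvalue of `|T|` in decreasing order. -/
noncomputable def sv {H : Type*} [NormedAddCommGroup H] [InnerProductSpace ℂ H]
    (T : H →L[ℂ] H) (m : ℕ) : ℝ :=
  ⨅ F : {F : H →L[ℂ] H // FiniteDimensional ℂ (LinearMap.range (F : H →ₗ[ℂ] H)) ∧
          Module.finrank ℂ (LinearMap.range (F : H →ₗ[ℂ] H)) ≤ m}, ‖T - F.1‖

open Finset MeasureTheory Set Submodule Topology

section Orthonormal
variable {ι E : Type*} [NormedAddCommGroup E] [InnerProductSpace ℂ E] {v : ι → E}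

theorem inner_map_sum_smul_sum_smul (c : E →L[ℂ] E) (v : ι → E) (A B : Finset ι) (x y : ι → ℂ) :
    ⟪c (∑ m ∈ A, x m • v m), ∑ n ∈ B, y n • v n⟫_ℂ =
      ∑ m ∈ A, ∑ n ∈ B, (starRingEnd ℂ) (x m) * y n * ⟪c (v m), v n⟫_ℂ := by
  simp only [map_sum, map_smul, sum_inner, inner_sum, inner_smul_left, inner_smul_right, mul_sum]
  rw [sum_comm]
  exact sum_congr rfl fun m _ => sum_congr rfl fun n _ => by ring

theorem Orthonormal.norm_sum_smul_sq (hv : Orthonormal ℂ v) (s : Finset ι) (x : ι → ℂ) :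
    ‖∑ i ∈ s, x i • v i‖ ^ 2 = ∑ i ∈ s, ‖x i‖ ^ 2 := by
  simpa using hv.orthogonalFamily.norm_sum x s

theorem Orthonormal.norm_sum_mul_smul_le (hv : Orthonormal ℂ v) {s : Finset ι} {r : ι → ℂ}
    {ρ : ℝ} (hρ : 0 ≤ ρ) (hr : ∀ i ∈ s, ‖r i‖ ≤ ρ) (x : ι → ℂ) :
    ‖∑ i ∈ s, (r i * x i) • v i‖ ≤ ρ * ‖∑ i ∈ s, x i • v i‖ := by
  refine le_of_pow_le_pow_left₀ two_ne_zero (by positivity) ?_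
  rw [mul_pow, hv.norm_sum_smul_sq, hv.norm_sum_smul_sq, mul_sum]
  gcongr with i hi
  rw [norm_mul, mul_pow]
  gcongr
  exact hr i hi

theorem Orthonormal.norm_sum_smul_le_of_subset (hv : Orthonormal ℂ v) {s t : Finset ι}
    (hst : s ⊆ t) (x : ι → ℂ) : ‖∑ i ∈ s, x i • v i‖ ≤ ‖∑ i ∈ t, x i • v i‖ := by
  refine le_of_pow_le_pow_left₀ two_ne_zero (norm_nonneg _) ?_
  rw [hv.norm_sum_smul_sq, hv.norm_sum_smul_sq]
  exact sum_le_sum_of_subset_of_nonneg hst fun i _ _ => sq_nonneg _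

theorem Orthonormal.norm_sum_inner_smul_le (hv : Orthonormal ℂ v) (s : Finset ι) (x : E) :
    ‖∑ i ∈ s, ⟪v i, x⟫_ℂ • v i‖ ≤ ‖x‖ := by
  refine le_of_pow_le_pow_left₀ two_ne_zero (norm_nonneg _) ?_
  rw [hv.norm_sum_smul_sq]
  exact hv.sum_inner_products_le x

theorem integral_inner_exp_smul_sum (c : E →L[ℂ] E) (v : ι → E) {μ : ι → ℝ}
    {A B : Finset ι} (hμ : ∀ m ∈ A, ∀ n ∈ B, 0 < μ m + μ n) (x y : ι → ℂ) :
    ∫ s in Ioi (0 : ℝ), ⟪c (∑ m ∈ A, ((Real.exp (-μ m * s) : ℂ) * x m) • v m),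
        ∑ n ∈ B, ((Real.exp (-μ n * s) : ℂ) * y n) • v n⟫_ℂ =
      ∑ m ∈ A, ∑ n ∈ B, (starRingEnd ℂ) (x m) * y n * ⟪c (v m), v n⟫_ℂ / (μ m + μ n : ℝ) := by
  have hintegrable : ∀ m ∈ A, ∀ n ∈ B,
      IntegrableOn (fun s : ℝ => (Real.exp (-(μ m + μ n) * s) : ℂ)) (Ioi 0) := fun m hm n hn =>
    (integrableOn_exp_mul_Ioi (by linarith [hμ m hm n hn]) 0).ofReal
  have hintegral : ∀ m ∈ A, ∀ n ∈ B,
      ∫ s in Ioi (0 : ℝ), (Real.exp (-(μ m + μ n) * s) : ℂ) = ((μ m + μ n : ℝ) : ℂ)⁻¹ := by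
    intro m hm n hn
    rw [integral_complex_ofReal, integral_exp_mul_Ioi (by linarith [hμ m hm n hn]), mul_zero,
      Real.exp_zero, neg_div_neg_eq, one_div, Complex.ofReal_inv]
  have hintegrand : ∀ s : ℝ, ⟪c (∑ m ∈ A, ((Real.exp (-μ m * s) : ℂ) * x m) • v m),
      ∑ n ∈ B, ((Real.exp (-μ n * s) : ℂ) * y n) • v n⟫_ℂ = ∑ m ∈ A, ∑ n ∈ B,
        (starRingEnd ℂ) (x m) * y n * ⟪c (v m), v n⟫_ℂ * (Real.exp (-(μ m + μ n) * s) : ℂ) := by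
    intro s
    simp only [inner_map_sum_smul_sum_smul, map_mul, Complex.conj_ofReal]
    refine sum_congr rfl fun m _ => sum_congr rfl fun n _ => ?_
    rw [show -(μ m + μ n) * s = -μ m * s + -μ n * s by ring, Real.exp_add]
    push_cast
    ring
  simp_rw [hintegrand]
  rw [integral_finsetSum _ fun m hm => integrable_finsetSum _ fun n hn =>
    (hintegrable m hm n hn).const_mul _]
  refine sum_congr rfl fun m hm => ?_
  rw [integral_finsetSum _ fun n hn => (hintegrable m hm n hn).const_mul _]
  refine sum_congr rfl fun n hn => ?_
  rw [integral_const_mul, hintegral m hm n hn, div_eq_mul_inv]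

theorem Orthonormal.norm_sum_sum_inner_div_add_le (hv : Orthonormal ℂ v) (c : E →L[ℂ] E)
    {μ : ι → ℝ} {R : ℝ} (hR : 0 < R) {A B : Finset ι} (hA : ∀ m ∈ A, R ≤ μ m)
    (hB : ∀ n ∈ B, R ≤ μ n) (x y : ι → ℂ) :
    ‖∑ m ∈ A, ∑ n ∈ B, (starRingEnd ℂ) (x m) * y n * ⟪c (v m), v n⟫_ℂ / (μ m + μ n : ℝ)‖ ≤
      ‖c‖ / (2 * R) * ‖∑ m ∈ A, x m • v m‖ * ‖∑ n ∈ B, y n • v n‖ := by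
  have hdecay : ∀ s, 0 ≤ s → ∀ S : Finset ι, (∀ m ∈ S, R ≤ μ m) → ∀ z : ι → ℂ,
      ‖∑ m ∈ S, ((Real.exp (-μ m * s) : ℂ) * z m) • v m‖ ≤
        Real.exp (-R * s) * ‖∑ m ∈ S, z m • v m‖ := by
    intro s hs S hS z
    refine hv.norm_sum_mul_smul_le (Real.exp_pos _).le (fun m hm => ?_) z
    rw [Complex.norm_real, Real.norm_of_nonneg (Real.exp_pos _).le]
    gcongr
    exact hS m hm
  set X := ‖∑ m ∈ A, x m • v m‖
  set Y := ‖∑ n ∈ B, y n • v n‖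
  have hbound : ∀ s ∈ Ioi (0 : ℝ), ‖⟪c (∑ m ∈ A, ((Real.exp (-μ m * s) : ℂ) * x m) • v m),
      ∑ n ∈ B, ((Real.exp (-μ n * s) : ℂ) * y n) • v n⟫_ℂ‖ ≤
        ‖c‖ * X * Y * Real.exp (-(2 * R) * s) := by
    intro s hs
    refine (norm_inner_le_norm _ _).trans ?_
    calc _ ≤ ‖c‖ * (Real.exp (-R * s) * X) * (Real.exp (-R * s) * Y) := by
          refine mul_le_mul ((c.le_opNorm _).trans ?_) (hdecay s hs.le B hB y) (norm_nonneg _)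
            (by positivity)
          gcongr
          exact hdecay s hs.le A hA x
      _ = ‖c‖ * X * Y * Real.exp (-(2 * R) * s) := by
          rw [show -(2 * R) * s = -R * s + -R * s by ring, Real.exp_add]; ring
  rw [← integral_inner_exp_smul_sum c v (fun m hm n hn => by linarith [hA m hm, hB n hn])]
  calc _ ≤ ∫ s in Ioi (0 : ℝ), ‖c‖ * X * Y * Real.exp (-(2 * R) * s) :=
        norm_integral_le_of_norm_le ((integrableOn_exp_mul_Ioi (by linarith) 0).const_mul _)
          ((ae_restrict_iff' measurableSet_Ioi).2 (Eventually.of_forall hbound))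
    _ = ‖c‖ / (2 * R) * X * Y := by
        rw [integral_const_mul, integral_exp_mul_Ioi (by linarith)]
        field_simp
        simp
end Orthonormal

section SingularValues
variable {H : Type*} [NormedAddCommGroup H] [InnerProductSpace ℂ H]

theorem sv_nonneg (T : H →L[ℂ] H) (m : ℕ) : 0 ≤ sv T m :=
  Real.iInf_nonneg fun _ => norm_nonneg _

theorem sv_le_norm_sub (T G : H →L[ℂ] H) {m : ℕ}
    [FiniteDimensional ℂ (LinearMap.range (G : H →ₗ[ℂ] H))]
    (hG : Module.finrank ℂ (LinearMap.range (G : H →ₗ[ℂ] H)) ≤ m) : sv T m ≤ ‖T - G‖ := by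
  have hbdd : BddBelow (Set.range fun F : {F : H →L[ℂ] H //
      FiniteDimensional ℂ (LinearMap.range (F : H →ₗ[ℂ] H)) ∧
        Module.finrank ℂ (LinearMap.range (F : H →ₗ[ℂ] H)) ≤ m} => ‖T - F.1‖) :=
    ⟨0, by rintro _ ⟨F, rfl⟩; exact norm_nonneg _⟩
  exact ciInf_le hbdd ⟨G, inferInstance, hG⟩

/-- The finite-rank operator `P T + Q T P` (`P` onto `K`, `Q` onto `Kᗮ`) leaves the
compression `Q T Q`. -/
theorem sv_le_of_norm_inner_le (T : H →L[ℂ] H) (K : Submodule ℂ H) [FiniteDimensional ℂ K]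
    {C : ℝ} (hC : 0 ≤ C) (hTK : ∀ x ∈ Kᗮ, ∀ y ∈ Kᗮ, ‖⟪T x, y⟫_ℂ‖ ≤ C * ‖x‖ * ‖y‖)
    {m : ℕ} (hm : 2 * Module.finrank ℂ K ≤ m) : sv T m ≤ C := by
  set Q := Kᗮ.starProjection
  set G := T - Q * T * Q
  have hrange : LinearMap.range (G : H →ₗ[ℂ] H) ≤
      K ⊔ K.map ((Q * T : H →L[ℂ] H) : H →ₗ[ℂ] H) := by
    rintro _ ⟨x, rfl⟩
    have hGx : G x = K.starProjection (T x) + Q (T (K.starProjection x)) := by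
      simp [G, Q, starProjection_orthogonal']
      abel
    rw [ContinuousLinearMap.coe_coe, hGx]
    exact add_mem_sup (K.starProjection_apply_mem _) (mem_map_of_mem (K.starProjection_apply_mem x))
  have : FiniteDimensional ℂ (LinearMap.range (G : H →ₗ[ℂ] H)) :=
    Submodule.finiteDimensional_of_le hrange
  refine (sv_le_norm_sub T G ((Submodule.finrank_mono hrange).trans ?_)).trans ?_
  · have := finrank_map_le ((Q * T : H →L[ℂ] H) : H →ₗ[ℂ] H) K
    have := finrank_add_le_finrank_add_finrank K (K.map ((Q * T : H →L[ℂ] H) : H →ₗ[ℂ] H))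
    omega
  refine opNorm_le_bound _ hC fun x => ?_
  set w := Q (T (Q x))
  have hw : w ∈ Kᗮ := Kᗮ.starProjection_apply_mem _
  have hQx : Q x ∈ Kᗮ := Kᗮ.starProjection_apply_mem _
  have hinner : ⟪T (Q x), w⟫_ℂ = ⟪w, w⟫_ℂ :=
    calc ⟪T (Q x), w⟫_ℂ = ⟪T (Q x), Q w⟫_ℂ := by rw [starProjection_eq_self_iff.2 hw]
      _ = ⟪w, w⟫_ℂ := (inner_starProjection_left_eq_right _ _ _).symm
  have hsq : ‖w‖ ^ 2 ≤ C * ‖x‖ * ‖w‖ :=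
    calc ‖w‖ ^ 2 = ‖⟪T (Q x), w⟫_ℂ‖ := by rw [hinner, inner_self_eq_norm_sq_to_K]; simp
      _ ≤ C * ‖Q x‖ * ‖w‖ := hTK _ hQx _ hw
      _ ≤ C * ‖x‖ * ‖w‖ := by gcongr; exact norm_starProjection_apply_le _ x
  have : (T - G) x = w := by simp [G, w]
  rw [this]
  nlinarith [norm_nonneg w, mul_nonneg hC (norm_nonneg x)]
end SingularValues

theorem Real.sign_sub_sign_of_mul_neg {x y : ℝ} (h : x * y < 0) :
    Real.sign y - Real.sign x = 2 * (y - x) / (|x| + |y|) := by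
  rcases mul_neg_iff.1 h with ⟨hx, hy⟩ | ⟨hx, hy⟩
  · rw [Real.sign_of_pos hx, Real.sign_of_neg hy, abs_of_pos hx, abs_of_neg hy,
      eq_div_iff (by linarith)]
    ring
  · rw [Real.sign_of_neg hx, Real.sign_of_pos hy, abs_of_neg hx, abs_of_pos hy,
      eq_div_iff (by linarith)]
    ring

theorem Real.sign_eq_sign_of_mul_pos {x y : ℝ} (h : 0 < x * y) : Real.sign x = Real.sign y := by
  rcases mul_pos_iff.1 h with ⟨hx, hy⟩ | ⟨hx, hy⟩
  · rw [Real.sign_of_pos hx, Real.sign_of_pos hy]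
  · rw [Real.sign_of_neg hx, Real.sign_of_neg hy]

section Commutator
variable {H : Type*} [NormedAddCommGroup H] [InnerProductSpace ℂ H] {b : HilbertBasis ℕ ℂ H}
  {F a c : H →L[ℂ] H}

theorem HilbertBasis.inner_apply_of_apply_eq_smul {ε : ℕ → ℝ}
    (hF : ∀ n, F (b n) = (ε n : ℂ) • b n) (x : H) (n : ℕ) :
    ⟪F x, b n⟫_ℂ = ε n * ⟪x, b n⟫_ℂ := by
  have hfun : (innerSL ℂ (b n)).comp F = (ε n : ℂ) • innerSL ℂ (b n) := by
    refine ext_on (Submodule.dense_iff_topologicalClosure_eq_top.2 b.dense_span) ?_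
    rintro _ ⟨i, rfl⟩
    rcases eq_or_ne i n with rfl | hin
    · simp [hF]
    · simp [hF, b.orthonormal.inner_eq_zero hin.symm]
  have := congrArg (fun f => (starRingEnd ℂ) (f x)) hfun
  simpa [inner_conj_symm] using this

variable {d : ℕ → ℝ}

theorem inner_commutator_apply_basis (hF : ∀ n, F (b n) = (Real.sign (d n) : ℂ) • b n)
    (m n : ℕ) : ⟪(F * a - a * F) (b m), b n⟫_ℂ =
      ((Real.sign (d n) - Real.sign (d m) : ℝ) : ℂ) * ⟪a (b m), b n⟫_ℂ := by
  change ⟪F (a (b m)) - a (F (b m)), b n⟫_ℂ = _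
  rw [inner_sub_left, b.inner_apply_of_apply_eq_smul hF, hF m, map_smul, inner_smul_left,
    Complex.conj_ofReal]
  push_cast
  ring

theorem inner_commutator_apply_basis_of_mul_pos
    (hF : ∀ n, F (b n) = (Real.sign (d n) : ℂ) • b n) {m n : ℕ} (h : 0 < d m * d n) :
    ⟪(F * a - a * F) (b m), b n⟫_ℂ = 0 := by
  rw [inner_commutator_apply_basis hF, Real.sign_eq_sign_of_mul_pos h, sub_self,
    Complex.ofReal_zero, zero_mul]

theorem inner_commutator_apply_basis_of_mul_neg
    (hF : ∀ n, F (b n) = (Real.sign (d n) : ℂ) • b n)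
    (hc : ∀ m n, ⟪c (b m), b n⟫_ℂ = ((d n - d m : ℝ) : ℂ) * ⟪a (b m), b n⟫_ℂ)
    {m n : ℕ} (h : d m * d n < 0) :
    ⟪(F * a - a * F) (b m), b n⟫_ℂ = 2 * ⟪c (b m), b n⟫_ℂ / (|d m| + |d n| : ℝ) := by
  rw [inner_commutator_apply_basis hF, hc, Real.sign_sub_sign_of_mul_neg h]
  push_cast
  ring

theorem norm_sum_sum_inner_commutator_le_of_mul_neg
    (hF : ∀ n, F (b n) = (Real.sign (d n) : ℂ) • b n)
    (hc : ∀ m n, ⟪c (b m), b n⟫_ℂ = ((d n - d m : ℝ) : ℂ) * ⟪a (b m), b n⟫_ℂ)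
    {R : ℝ} (hR : 0 < R) {A B : Finset ℕ} (hA : ∀ m ∈ A, R ≤ |d m|) (hB : ∀ n ∈ B, R ≤ |d n|)
    (hAB : ∀ m ∈ A, ∀ n ∈ B, d m * d n < 0) (x y : ℕ → ℂ) :
    ‖∑ m ∈ A, ∑ n ∈ B, (starRingEnd ℂ) (x m) * y n * ⟪(F * a - a * F) (b m), b n⟫_ℂ‖ ≤
      ‖c‖ / R * ‖∑ m ∈ A, x m • b m‖ * ‖∑ n ∈ B, y n • b n‖ := by
  have hsum : ∑ m ∈ A, ∑ n ∈ B, (starRingEnd ℂ) (x m) * y n * ⟪(F * a - a * F) (b m), b n⟫_ℂ =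
      2 * ∑ m ∈ A, ∑ n ∈ B,
        (starRingEnd ℂ) (x m) * y n * ⟪c (b m), b n⟫_ℂ / (|d m| + |d n| : ℝ) := by
    simp only [mul_sum]
    refine sum_congr rfl fun m hm => sum_congr rfl fun n hn => ?_
    rw [inner_commutator_apply_basis_of_mul_neg hF hc (hAB m hm n hn)]
    ring
  rw [hsum, norm_mul, Complex.norm_ofNat]
  calc _ ≤ 2 * (‖c‖ / (2 * R) * ‖∑ m ∈ A, x m • b m‖ * ‖∑ n ∈ B, y n • b n‖) := by
        gcongr
        exact b.orthonormal.norm_sum_sum_inner_div_add_le c hR hA hB x y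
    _ = ‖c‖ / R * ‖∑ m ∈ A, x m • b m‖ * ‖∑ n ∈ B, y n • b n‖ := by field_simp

theorem norm_inner_commutator_sum_le (hd : ∀ n, d n ≠ 0)
    (hF : ∀ n, F (b n) = (Real.sign (d n) : ℂ) • b n)
    (hc : ∀ m n, ⟪c (b m), b n⟫_ℂ = ((d n - d m : ℝ) : ℂ) * ⟪a (b m), b n⟫_ℂ)
    {R : ℝ} (hR : 0 < R) {A : Finset ℕ} (hA : ∀ m ∈ A, R ≤ |d m|) (x y : ℕ → ℂ) :
    ‖⟪(F * a - a * F) (∑ m ∈ A, x m • b m), ∑ n ∈ A, y n • b n⟫_ℂ‖ ≤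
      2 * ‖c‖ / R * ‖∑ m ∈ A, x m • b m‖ * ‖∑ n ∈ A, y n • b n‖ := by
  set f : ℕ → ℕ → ℂ := fun m n => (starRingEnd ℂ) (x m) * y n * ⟪(F * a - a * F) (b m), b n⟫_ℂ
  set P := A.filter (fun m => 0 < d m)
  set N := A.filter (fun m => ¬ 0 < d m)
  have hP : ∀ m ∈ P, 0 < d m := fun m hm => (mem_filter.1 hm).2
  have hN : ∀ m ∈ N, d m < 0 := fun m hm => lt_of_le_of_ne (not_lt.1 (mem_filter.1 hm).2) (hd m)
  have hsame : ∀ S S' : Finset ℕ, (∀ m ∈ S, ∀ n ∈ S', 0 < d m * d n) →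
      ∑ m ∈ S, ∑ n ∈ S', f m n = 0 := fun S S' h =>
    sum_eq_zero fun m hm => sum_eq_zero fun n hn => by
      simp only [f, inner_commutator_apply_basis_of_mul_pos hF (h m hm n hn), mul_zero]
  have hrow : ∀ m, ∑ n ∈ A, f m n = ∑ n ∈ P, f m n + ∑ n ∈ N, f m n := fun m =>
    (sum_filter_add_sum_filter_not _ _ _).symm
  rw [inner_map_sum_smul_sum_smul, sum_congr rfl fun m _ => hrow m, sum_add_distrib,
    ← sum_filter_add_sum_filter_not A (fun m => 0 < d m) (fun m => ∑ n ∈ P, f m n),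
    ← sum_filter_add_sum_filter_not A (fun m => 0 < d m) (fun m => ∑ n ∈ N, f m n),
    hsame P P fun m hm n hn => mul_pos (hP m hm) (hP n hn),
    hsame N N fun m hm n hn => mul_pos_of_neg_of_neg (hN m hm) (hN n hn), zero_add, add_zero]
  have hAP : ∀ m ∈ P, R ≤ |d m| := fun m hm => hA m (filter_subset _ A hm)
  have hAN : ∀ m ∈ N, R ≤ |d m| := fun m hm => hA m (filter_subset _ A hm)
  calc _ ≤ ‖∑ m ∈ N, ∑ n ∈ P, f m n‖ + ‖∑ m ∈ P, ∑ n ∈ N, f m n‖ := norm_add_le _ _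
    _ ≤ ‖c‖ / R * ‖∑ m ∈ N, x m • b m‖ * ‖∑ n ∈ P, y n • b n‖ +
          ‖c‖ / R * ‖∑ m ∈ P, x m • b m‖ * ‖∑ n ∈ N, y n • b n‖ :=
        add_le_add
          (norm_sum_sum_inner_commutator_le_of_mul_neg hF hc hR hAN hAP
            (fun m hm n hn => mul_neg_of_neg_of_pos (hN m hm) (hP n hn)) x y)
          (norm_sum_sum_inner_commutator_le_of_mul_neg hF hc hR hAP hAN
            (fun m hm n hn => mul_neg_of_pos_of_neg (hP m hm) (hN n hn)) x y)
    _ ≤ ‖c‖ / R * ‖∑ m ∈ A, x m • b m‖ * ‖∑ n ∈ A, y n • b n‖ +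
          ‖c‖ / R * ‖∑ m ∈ A, x m • b m‖ * ‖∑ n ∈ A, y n • b n‖ := by
        have := b.orthonormal
        gcongr <;> exact this.norm_sum_smul_le_of_subset (filter_subset _ A) _
    _ = _ := by ring

theorem norm_inner_commutator_le_of_inner_eq_zero (hd : ∀ n, d n ≠ 0)
    (hF : ∀ n, F (b n) = (Real.sign (d n) : ℂ) • b n)
    (hc : ∀ m n, ⟪c (b m), b n⟫_ℂ = ((d n - d m : ℝ) : ℂ) * ⟪a (b m), b n⟫_ℂ)
    {R : ℝ} (hR : 0 < R) {s : Finset ℕ} (hs : ∀ n ∉ s, R ≤ |d n|) {x y : H}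
    (hx : ∀ k ∈ s, ⟪b k, x⟫_ℂ = 0) (hy : ∀ k ∈ s, ⟪b k, y⟫_ℂ = 0) :
    ‖⟪(F * a - a * F) x, y⟫_ℂ‖ ≤ 2 * ‖c‖ / R * ‖x‖ * ‖y‖ := by
  have hpartial : ∀ z : H, (∀ k ∈ s, ⟪b k, z⟫_ℂ = 0) →
      Tendsto (fun A : Finset ℕ => ∑ k ∈ A \ s, ⟪b k, z⟫_ℂ • b k) atTop (𝓝 z) := by
    intro z hz
    have hsum : Tendsto (fun A : Finset ℕ => ∑ k ∈ A, b.repr z k • b k) atTop (𝓝 z) :=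
      b.hasSum_repr z
    refine hsum.congr fun A => ?_
    simp only [b.repr_apply_apply]
    refine (sum_subset sdiff_subset fun k hk hks => ?_).symm
    rw [hz k (by simpa [hk] using hks), zero_smul]
  refine le_of_tendsto_of_tendsto'
    ((((F * a - a * F).continuous.tendsto x).comp (hpartial x hx)).inner (hpartial y hy)).norm
    tendsto_const_nhds fun A => ?_
  refine (norm_inner_commutator_sum_le hd hF hc hR (fun m hm => hs m (mem_sdiff.1 hm).2)
    _ _).trans ?_
  gcongr
  exacts [b.orthonormal.norm_sum_inner_smul_le _ x, b.orthonormal.norm_sum_inner_smul_le _ y]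

theorem sv_commutator_sign_le (hd : ∀ n, d n ≠ 0)
    (hF : ∀ n, F (b n) = (Real.sign (d n) : ℂ) • b n)
    (hc : ∀ m n, ⟪c (b m), b n⟫_ℂ = ((d n - d m : ℝ) : ℂ) * ⟪a (b m), b n⟫_ℂ)
    {R : ℝ} (hR : 0 < R) {s : Finset ℕ} (hs : ∀ n ∉ s, R ≤ |d n|) {m : ℕ} (hm : 2 * #s ≤ m) :
    sv (F * a - a * F) m ≤ 2 * ‖c‖ / R := by
  classical
  set K := span ℂ ((s.image b : Finset H) : Set H)
  have hperp : ∀ z ∈ Kᗮ, ∀ k ∈ s, ⟪b k, z⟫_ℂ = 0 := fun z hz k hk =>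
    inner_right_of_mem_orthogonal (subset_span (by simpa using ⟨k, hk, rfl⟩)) hz
  refine sv_le_of_norm_inner_le _ K (by positivity) (fun x hx y hy =>
    norm_inner_commutator_le_of_inner_eq_zero hd hF hc hR hs (hperp x hx) (hperp y hy)) ?_
  exact le_trans (by gcongr; exact (finrank_span_finset_le_card _).trans card_image_le) hm
end Commutator

theorem Finset.sum_range_sum_sdiff {α G : Type*} [DecidableEq α] [AddCommGroup G] {s : ℕ → Finset α}
    (hs : Monotone s) (f : α → G) (J : ℕ) :
    ∑ j ∈ range J, ∑ x ∈ s (j + 1) \ s j, f x = ∑ x ∈ s J, f x - ∑ x ∈ s 0, f x := by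
  rw [← sum_range_sub (fun j => ∑ x ∈ s j, f x)]
  exact sum_congr rfl fun j _ => sum_sdiff_eq_sub (hs j.le_succ)

theorem summable_of_le_on_shells {σ β w : ℕ → ℝ} {s : ℕ → Finset ℕ}
    (hσ : ∀ m, 0 ≤ σ m) (hs : Monotone s) (hs0 : s 0 = ∅) (hcover : ∀ n, ∃ j, n ∈ s j)
    (hσβ : ∀ j m, 2 * #(s j) ≤ m → σ m ≤ β j)
    (hβw : ∀ j, ∀ n ∈ s (j + 1) \ s j, β j ≤ w n) (hw0 : ∀ n, 0 ≤ w n) (hw : Summable w) :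
    Summable σ := by
  choose jn hjn using hcover
  refine summable_of_sum_range_le (c := 2 * ∑' n, w n) hσ fun M => ?_
  obtain ⟨J, hJ⟩ : ∃ J, range M ⊆ s J := ⟨_, fun n hn => hs (le_sup hn) (hjn n)⟩
  have hMJ : M ≤ 2 * #(s J) := by
    have := Finset.card_le_card hJ
    rw [card_range] at this
    omega
  set t : ℕ → Finset ℕ := fun j => range (2 * #(s j))
  have ht : Monotone t := fun i j hij => range_subset_range.2 (by gcongr; exact hs hij)
  have hshell : ∀ j, ∑ m ∈ t (j + 1) \ t j, σ m ≤ 2 * ∑ n ∈ s (j + 1) \ s j, w n := by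
    intro j
    have hcard : #(t (j + 1) \ t j) = 2 * #(s (j + 1) \ s j) := by
      have := Finset.card_le_card (hs j.le_succ)
      rw [card_sdiff_of_subset (ht j.le_succ), card_sdiff_of_subset (hs j.le_succ)]
      simp only [t, card_range]
      omega
    calc ∑ m ∈ t (j + 1) \ t j, σ m ≤ #(t (j + 1) \ t j) • β j :=
          sum_le_card_nsmul _ _ _ fun m hm => hσβ j m (by simpa [t] using (mem_sdiff.1 hm).2)
      _ = 2 * ∑ n ∈ s (j + 1) \ s j, β j := by
          rw [hcard, sum_const, nsmul_eq_mul, nsmul_eq_mul]; push_cast; ring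
      _ ≤ 2 * ∑ n ∈ s (j + 1) \ s j, w n := by gcongr with n hn; exact hβw j n hn
  calc ∑ m ∈ range M, σ m ≤ ∑ m ∈ t J, σ m :=
        sum_le_sum_of_subset_of_nonneg (range_subset_range.2 hMJ) fun m _ _ => hσ m
    _ = ∑ j ∈ range J, ∑ m ∈ t (j + 1) \ t j, σ m := by
        rw [sum_range_sum_sdiff ht]; simp [t, hs0]
    _ ≤ ∑ j ∈ range J, 2 * ∑ n ∈ s (j + 1) \ s j, w n := sum_le_sum fun j _ => hshell j
    _ = 2 * ∑ n ∈ s J, w n := by rw [← mul_sum, sum_range_sum_sdiff hs, hs0, sum_empty, sub_zero]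
    _ ≤ 2 * ∑' n, w n := by gcongr; exact hw.sum_le_tsum _ fun n _ => hw0 n

theorem summable_rpow_of_le_div_of_card_le {σ μ : ℕ → ℝ} {p C : ℝ} (hp : 0 ≤ p) (hC : 0 ≤ C)
    (hσ : ∀ m, 0 ≤ σ m) (hμ : Tendsto μ atTop atTop) (hμ0 : ∀ n, 0 < μ n)
    (hsum : Summable fun n => μ n ^ (-p))
    (hσμ : ∀ R > 0, ∀ s : Finset ℕ, (∀ n ∉ s, R ≤ μ n) → ∀ m, 2 * #s ≤ m → σ m ≤ C / R) :
    Summable fun m => σ m ^ p := by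
  rw [← Nat.cofinite_eq_atTop] at hμ
  obtain ⟨n₀, hn₀⟩ := hμ.exists_forall_le
  set δ := μ n₀
  have hδ : 0 < δ := hμ0 n₀
  have hfin : ∀ R, {n | μ n < R}.Finite := fun R => by
    simpa using eventually_cofinite.1 (hμ.eventually_ge_atTop R)
  set s : ℕ → Finset ℕ := fun j => (hfin (δ * 2 ^ j)).toFinset
  have hmem : ∀ j n, n ∈ s j ↔ μ n < δ * 2 ^ j := fun j n => by simp [s]
  refine summable_of_le_on_shells (s := s) (β := fun j => (C / (δ * 2 ^ j)) ^ p)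
    (w := fun n => (2 * C) ^ p * μ n ^ (-p)) (fun m => Real.rpow_nonneg (hσ m) p)
    (fun i j hij n => by simp only [hmem]; intro h; exact h.trans_le (by gcongr; norm_num))
    (by ext n; simpa [hmem] using hn₀ n) (fun n => ?_) (fun j m hm => ?_) (fun j n hn => ?_)
    (fun n => by have := hμ0 n; positivity) (hsum.mul_left _)
  · obtain ⟨j, hj⟩ := pow_unbounded_of_one_lt (μ n / δ) one_lt_two
    exact ⟨j, (hmem j n).2 (by rwa [div_lt_iff₀' hδ] at hj)⟩
  · refine Real.rpow_le_rpow (hσ m) (hσμ _ (by positivity) (s j) (fun n hn => ?_) m hm) hp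
    exact not_lt.1 fun h => hn ((hmem j n).2 h)
  · obtain ⟨hn1, hn2⟩ := mem_sdiff.1 hn
    rw [hmem, pow_succ] at hn1
    rw [hmem, not_lt] at hn2
    have hμn := hμ0 n
    calc (C / (δ * 2 ^ j)) ^ p ≤ (2 * C / μ n) ^ p := by
          refine Real.rpow_le_rpow (by positivity) ?_ hp
          rw [div_le_div_iff₀ (by positivity) hμn]
          nlinarith
      _ = (2 * C) ^ p * μ n ^ (-p) := by
          rw [Real.div_rpow (by positivity) hμn.le, Real.rpow_neg hμn.le, div_eq_mul_inv]

theorem summable_rpow_neg_of_summable_one_add_sq {μ : ℕ → ℝ} {p : ℝ} (hp : 0 ≤ p)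
    (hμ : Tendsto μ atTop atTop) (hsum : Summable fun n => (1 + μ n ^ 2) ^ (-(p / 2))) :
    Summable fun n => μ n ^ (-p) := by
  refine (hsum.mul_left (2 ^ (p / 2))).of_norm_bounded_eventually_nat ?_
  filter_upwards [hμ.eventually_ge_atTop 1] with n hn
  have hμn : 0 < μ n := one_pos.trans_le hn
  rw [Real.norm_of_nonneg (Real.rpow_nonneg hμn.le _)]
  calc μ n ^ (-p) = (μ n ^ 2) ^ (-(p / 2)) := by
        rw [← Real.rpow_natCast, ← Real.rpow_mul hμn.le]; congr 1; push_cast; ring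
    _ ≤ ((1 + μ n ^ 2) / 2) ^ (-(p / 2)) :=
        Real.rpow_le_rpow_of_nonpos (by positivity) (by nlinarith) (by linarith)
    _ = 2 ^ (p / 2) * (1 + μ n ^ 2) ^ (-(p / 2)) := by
        rw [Real.div_rpow (by positivity) zero_le_two, Real.rpow_neg zero_le_two,
          div_eq_mul_inv, inv_inv, mul_comm]

/-- `D` is given by its eigenbasis `b` and eigenvalues `d`; `c` plays the role of `[D,a]`. -/
theorem commutator_sign_in_schatten_class_general
    {H : Type*} [NormedAddCommGroup H] [InnerProductSpace ℂ H]
    (p : ℝ) (hp : 1 < p)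
    (b : HilbertBasis ℕ ℂ H) (d : ℕ → ℝ) (hd : ∀ n, d n ≠ 0)
    (hres : Tendsto (fun n => |d n|) atTop atTop)
    (hsum : Summable (fun n => ((1 + (d n) ^ 2) ^ (-(p / 2)) : ℝ)))
    (F : H →L[ℂ] H) (hF : ∀ n, F (b n) = (Real.sign (d n) : ℂ) • b n)
    (a : H →L[ℂ] H)
    (hcomm : ∃ c : H →L[ℂ] H, ∀ m n,
      ⟪c (b m), b n⟫_ℂ = ((d n - d m : ℝ) : ℂ) * ⟪a (b m), b n⟫_ℂ) :
    Summable (fun m => sv (F * a - a * F) m ^ p) := by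
  obtain ⟨c, hc⟩ := hcomm
  have hp0 : 0 ≤ p := by linarith
  have hsum' : Summable fun n => |d n| ^ (-p) :=
    summable_rpow_neg_of_summable_one_add_sq hp0 hres (by simpa only [sq_abs] using hsum)
  exact summable_rpow_of_le_div_of_card_le hp0 (by positivity) (sv_nonneg _) hres
    (fun n => abs_pos.2 (hd n)) hsum' fun R hR s hs m hm => sv_commutator_sign_le hd hF hc hR hs hm

/-- Let `(A,H,D)` be a `p`-summable spectral triple with `D` invertible.
Here the self-adjoint operator `D` with compact resolvent is encoded by a Hilbert basis `b` of
eigenvectors with eigenvalues `d n ≠ 0`, `|d n| → ∞`; `p`-summability means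
`∑ (1+d n²)^{-p/2} < ∞`; `F = sign D` acts by `F (b n) = sign (d n) • b n`; the commutator
`[D,a]` is bounded, i.e. there is a bounded operator `c` with matrix elements
`⟪c bₘ, bₙ⟫ = (dₙ - dₘ)⟪a bₘ, bₙ⟫`.  Then `[F,a]` belongs to the Schatten class `L^p(H)`. -/
theorem commutator_sign_in_schatten_class
    {H : Type*} [NormedAddCommGroup H] [InnerProductSpace ℂ H] [CompleteSpace H]
    (p : ℝ) (hp : 1 < p)
    (b : HilbertBasis ℕ ℂ H) (d : ℕ → ℝ) (hd : ∀ n, d n ≠ 0)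
    (hres : Tendsto (fun n => |d n|) atTop atTop)
    (hsum : Summable (fun n => ((1 + (d n) ^ 2) ^ (-(p / 2)) : ℝ)))
    (F : H →L[ℂ] H) (hF : ∀ n, F (b n) = (Real.sign (d n) : ℂ) • b n)
    (a : H →L[ℂ] H)
    (hcomm : ∃ c : H →L[ℂ] H, ∀ m n,
      ⟪c (b m), b n⟫_ℂ = ((d n - d m : ℝ) : ℂ) * ⟪a (b m), b n⟫_ℂ) :
    Summable (fun m => sv (F * a - a * F) m ^ p) :=
  commutator_sign_in_schatten_class_general p hp b d hd hres hsum F hF a hcomm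
end

section
/- Let F be a self-adjoint operator with F² = I on H and let S be a positive compact injective operator commuting with F. Define |D| = S^{-1/2} + F S^{-1/2} F (an unbounded positive operator) and D = F|D|. Then D is self-adjoint, sign D = F, and D has compact resolvent. -/
open ContinuousLinearMap

/-!
`R`, the positive square root of `S`, is a continuous function of `S`, so it commutes with
everything that commutes with `S`, in particular with `F`. Hence `B = ½ F R` is self-adjoint with
`B* B = (½ R)²`, and uniqueness of positive square roots gives `|B| = ½ R`, i.e. `B = F |B|`.
`R` is compact because `‖R u‖² = ⟪u, S u⟫ ≤ ‖u‖ ‖S u‖`: an `ε²/2`-net of the image of the unit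
ball under `S` yields an `ε`-net of its image under `R`.
-/

theorem Commute.of_mul_self_left {A : Type*} [CStarAlgebra A] [PartialOrder A] [StarOrderedRing A]
    {r b : A} (hr : 0 ≤ r) (h : Commute (r * r) b) : Commute r b := by
  rw [← CFC.sqrt_mul_self r]
  exact h.cfcₙ_nnreal _

theorem IsCompactOperator.of_norm_sq_le_mul {𝕜 E F G : Type*} [NontriviallyNormedField 𝕜]
    [NormedAddCommGroup E] [NormedSpace 𝕜 E] [NormedAddCommGroup F] [NormedSpace 𝕜 F]
    [CompleteSpace F] [NormedAddCommGroup G] [NormedSpace 𝕜 G]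
    {T : E →L[𝕜] F} {S : E →L[𝕜] G} (hS : IsCompactOperator S)
    (hTS : ∀ u, ‖T u‖ ^ 2 ≤ ‖u‖ * ‖S u‖) : IsCompactOperator T := by
  refine (isCompactOperator_iff_isCompact_closure_image_ball (T : E →ₗ[𝕜] F) one_pos).2 ?_
  rw [ContinuousLinearMap.coe_coe]
  refine (TotallyBounded.closure ?_).isCompact_of_isClosed isClosed_closure
  refine Metric.totallyBounded_iff.2 fun ε hε => ?_
  have hSball : TotallyBounded (S '' Metric.ball 0 1) :=
    (hS.isCompact_closure_image_ball 1).totallyBounded.subset subset_closure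
  obtain ⟨t, htball, htfin, hScov⟩ := Set.exists_subset_image_finite_and.1 <|
    Metric.finite_approx_of_totallyBounded hSball (ε ^ 2 / 2) (by positivity)
  refine ⟨T '' t, htfin.image T, ?_⟩
  rintro _ ⟨x, hx, rfl⟩
  obtain ⟨_, ⟨z, hzt, rfl⟩, hSxz⟩ := Set.mem_iUnion₂.1 (hScov ⟨x, hx, rfl⟩)
  refine Set.mem_iUnion₂.2 ⟨T z, ⟨z, hzt, rfl⟩, ?_⟩
  rw [Metric.mem_ball, dist_eq_norm, ← map_sub] at hSxz ⊢
  have hxz : ‖x - z‖ < 2 := by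
    have := htball hzt
    rw [mem_ball_zero_iff] at hx this
    linarith [norm_sub_le x z]
  nlinarith [hTS (x - z), norm_nonneg (T (x - z)), norm_nonneg (x - z), norm_nonneg (S (x - z))]

theorem IsCompactOperator.of_adjoint_comp_self {𝕜 E F : Type*} [RCLike 𝕜]
    [NormedAddCommGroup E] [InnerProductSpace 𝕜 E] [CompleteSpace E]
    [NormedAddCommGroup F] [InnerProductSpace 𝕜 F] [CompleteSpace F]
    {T : E →L[𝕜] F} (hT : IsCompactOperator (adjoint T ∘L T)) : IsCompactOperator T := by
  refine hT.of_norm_sq_le_mul fun u => ?_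
  rw [apply_norm_sq_eq_inner_adjoint_left, mul_comm]
  exact (RCLike.re_le_norm _).trans (norm_inner_le_norm _ _)

/-- The unbounded operator `D = F |D|` is encoded through its bounded inverse
`B = D⁻¹ = ½ F R`, where `R = S^{1/2}`: self-adjointness and compact resolvent of `D` become
self-adjointness, compactness and injectivity of `B`, and `sign D = F` becomes `B = F |B|`. -/
theorem lifted_operator_selfadjoint_sign_compact_resolvent_general
    {H : Type*} [NormedAddCommGroup H] [InnerProductSpace ℂ H] [CompleteSpace H]
    (F : H →L[ℂ] H) (hF : IsSelfAdjoint F) (hF2 : F * F = 1)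
    (S : H →L[ℂ] H) (hScp : IsCompactOperator S)
    (hSinj : Function.Injective S) (hFS : F * S = S * F)
    (R : H →L[ℂ] H) (hRpos : R.IsPositive) (hRsq : R * R = S) :
    IsSelfAdjoint (((1:ℝ)/2) • (F * R)) ∧
    IsCompactOperator (((1:ℝ)/2) • (F * R)) ∧
    Function.Injective (((1:ℝ)/2) • (F * R)) ∧
    (∀ P : H →L[ℂ] H, P.IsPositive →
      P * P = star (((1:ℝ)/2) • (F * R)) * (((1:ℝ)/2) • (F * R)) →
      ((1:ℝ)/2) • (F * R) = F * P) := by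
  have hR : 0 ≤ R := (nonneg_iff_isPositive R).2 hRpos
  have hRF : Commute R F := .of_mul_self_left hR (hRsq ▸ hFS.symm)
  have hB : IsSelfAdjoint (((1:ℝ)/2) • (F * R)) :=
    .smul (star_trivial _) ((hF.commute_iff hRpos.isSelfAdjoint).1 hRF.symm)
  have hFRFR : F * R * (F * R) = R * R := by
    rw [hRF.mul_mul_mul_comm, hF2, one_mul]
  refine ⟨hB, ?_, ?_, fun P hP hPsq => ?_⟩
  · have hRcp : IsCompactOperator R :=
      .of_adjoint_comp_self (by rwa [hRpos.isSelfAdjoint.adjoint_eq, ← mul_def, hRsq])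
    exact (hRcp.clm_comp F).smul _
  · have hFinj : Function.Injective F := Function.LeftInverse.injective (g := F)
      (DFunLike.congr_fun hF2)
    have hRinj : Function.Injective R :=
      .of_comp (f := R) (show Function.Injective ⇑(R * R) from hRsq ▸ hSinj)
    exact (smul_right_injective H (by norm_num : (1:ℝ)/2 ≠ 0)).comp (hFinj.comp hRinj)
  · have hPR : P = ((1:ℝ)/2) • R := by
      refine (CFC.mul_self_eq_mul_self_iff P _ ((nonneg_iff_isPositive P).2 hP)
        (smul_nonneg (by norm_num) hR)).1 ?_
      rw [hPsq, hB.star_eq, smul_mul_smul_comm, smul_mul_smul_comm, hFRFR]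
    rw [hPR, mul_smul_comm]

/-- Let `F = F*`, `F² = I`, and let `S` be a compact positive injective
operator commuting with `F`.  Set `|D| = S^{-1/2} + F S^{-1/2} F = 2 S^{-1/2}` and `D = F |D|`.
Then `D` is self-adjoint with compact resolvent and `sign D = F`.  We encode the unbounded
operator `D` through its bounded inverse `B = D⁻¹ = (1/2) F S^{1/2} = (1/2) F R`, where `R` is
the positive square root of `S`: the claims become that `B` is self-adjoint, compact and
injective, and that in the polar decomposition of `B` (hence of `D`) the partial isometry is
`F`, i.e. `B = F |B|` for the positive square root `|B|` of `B* B`. -/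
theorem lifted_operator_selfadjoint_sign_compact_resolvent
    {H : Type*} [NormedAddCommGroup H] [InnerProductSpace ℂ H] [CompleteSpace H]
    (F : H →L[ℂ] H) (hF : IsSelfAdjoint F) (hF2 : F * F = 1)
    (S : H →L[ℂ] H) (hScp : IsCompactOperator S) (hSpos : S.IsPositive)
    (hSinj : Function.Injective S) (hFS : F * S = S * F)
    (R : H →L[ℂ] H) (hRpos : R.IsPositive) (hRsq : R * R = S) :
    IsSelfAdjoint (((1:ℝ)/2) • (F * R)) ∧
    IsCompactOperator (((1:ℝ)/2) • (F * R)) ∧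
    Function.Injective (((1:ℝ)/2) • (F * R)) ∧
    (∀ P : H →L[ℂ] H, P.IsPositive →
      P * P = star (((1:ℝ)/2) • (F * R)) * (((1:ℝ)/2) • (F * R)) →
      ((1:ℝ)/2) • (F * R) = F * P) :=
  lifted_operator_selfadjoint_sign_compact_resolvent_general F hF hF2 S hScp hSinj hFS R hRpos hRsq
end

section
/- Suppose q > 0, r ≥ 0, C > 0, and (μ_m) is a nonincreasing nonnegative sequence with Σ_m μ_m^{q - (r+1)/2} < ∞. If Γ is a countable set with weights ρ(u) = e^{-(1+L(u))}, where L has polynomial growth r, and h(t) = (log(1/t))^{-2} for small t > 0, then Σ_m Σ_{u} h(ρ(u) f(μ_m))^q ≤ C' Σ_m μ_m^{q-(r+1)/2} for some constant C', where f is the inverse of h (so h(ρ f(μ)) ≤ (1 + L(u) + h(f(μ))^{-1/2})^{-2} type bounds apply); in particular Σ_u (1 + L(u) + s)^{-2q} ≤ C'' s^{-(2q - r - 1)} for s ≥ 1. -/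
open Finset MeasureTheory

/-- Auxiliary: tail-sum estimate `∑_{n≥0} (n+s)^{-α} ≤ (1 + 1/(α-1)) s^{1-α}` for `α>1`, `s≥1`. -/
lemma shifted_rpow_sum_bound {α s : ℝ} (hα : 1 < α) (hs : 1 ≤ s) :
    Summable (fun n : ℕ => ((n : ℝ) + s) ^ (-α)) ∧
    (∑' n : ℕ, ((n : ℝ) + s) ^ (-α)) ≤ (1 + 1 / (α - 1)) * s ^ (1 - α) := by
  have hs0 : (0:ℝ) < s := lt_of_lt_of_le one_pos hs
  have hα1 : (0:ℝ) < α - 1 := by linarith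
  have hnonneg : ∀ n : ℕ, 0 ≤ ((n : ℝ) + s) ^ (-α) := fun n =>
    Real.rpow_nonneg (by positivity) _
  -- integral comparison for the shifted terms
  have key : ∀ M : ℕ, ∑ i ∈ Finset.range M, (s + ((i : ℕ) + 1 : ℕ)) ^ (-α)
      ≤ s ^ (1 - α) / (α - 1) := by
    intro M
    have hanti : AntitoneOn (fun x : ℝ => x ^ (-α)) (Set.Icc s (s + M)) := by
      intro x hx y hy hxy
      exact Real.rpow_le_rpow_of_nonpos (lt_of_lt_of_le hs0 hx.1) hxy (by linarith)
    have h1 := hanti.sum_le_integral (a := M)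
    have h2 : ∫ x in s..s + (M:ℝ), x ^ (-α)
        = ((s + M) ^ (-α + 1) - s ^ (-α + 1)) / (-α + 1) := by
      apply integral_rpow
      right
      constructor
      · intro h; linarith
      · intro h
        rw [Set.mem_uIcc] at h
        rcases h with ⟨h, _⟩ | ⟨h, _⟩ <;>
          [linarith; (have hM0 : (0:ℝ) ≤ (M:ℝ) := Nat.cast_nonneg M; linarith)]
    have h3 : ((s + M) ^ (-α + 1) - s ^ (-α + 1)) / (-α + 1)
        ≤ s ^ (1 - α) / (α - 1) := by
      have hM : (0:ℝ) ≤ (s + M) ^ (-α + 1) := Real.rpow_nonneg (by positivity) _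
      have heq : ((s + M) ^ (-α + 1) - s ^ (-α + 1)) / (-α + 1)
          = (s ^ (-α + 1) - (s + M) ^ (-α + 1)) / (α - 1) := by
        rw [div_eq_div_iff (by linarith) (by linarith)]; ring
      rw [heq, show (1:ℝ) - α = -α + 1 by ring]
      apply div_le_div_of_nonneg_right _ hα1.le
      linarith
    calc ∑ i ∈ Finset.range M, (s + ((i : ℕ) + 1 : ℕ)) ^ (-α)
        ≤ ∫ x in s..s + (M:ℝ), x ^ (-α) := h1
      _ ≤ s ^ (1 - α) / (α - 1) := h2 ▸ h3
  have hbound : ∀ N : ℕ, ∑ n ∈ Finset.range N, ((n : ℝ) + s) ^ (-α)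
      ≤ (1 + 1 / (α - 1)) * s ^ (1 - α) := by
    intro N
    have hc0 : (0:ℝ) ≤ (1 + 1 / (α - 1)) * s ^ (1 - α) := by positivity
    cases N with
    | zero => simpa using hc0
    | succ M =>
      rw [Finset.sum_range_succ']
      have e1 : ∀ i : ℕ, (((i + 1 : ℕ) : ℝ) + s) ^ (-α) = (s + ((i : ℕ) + 1 : ℕ)) ^ (-α) := by
        intro i; rw [add_comm]
      simp only [e1]
      have e2 : (((0:ℕ) : ℝ) + s) ^ (-α) ≤ s ^ (1 - α) := by
        rw [Nat.cast_zero, zero_add]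
        exact Real.rpow_le_rpow_of_exponent_le hs (by linarith)
      have hkM := key M
      have e3 : (1 + 1 / (α - 1)) * s ^ (1 - α)
          = s ^ (1 - α) / (α - 1) + s ^ (1 - α) := by
        field_simp
        ring
      rw [e3]
      exact add_le_add hkM e2
  refine ⟨summable_of_sum_range_le hnonneg hbound, Real.tsum_le_of_sum_range_le hnonneg hbound⟩

/-- **key growth estimate.** If `L : Γ → [0,∞)` on a countable set `Γ`
satisfies `card {u : L u ≤ k} ≤ C (1+k)^r`, then for every `q` with `2q > r + 1` there is a
constant `C'' > 0` such that for all `s ≥ 1`,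
`∑_{u ∈ Γ} (1 + L u + s)^{-2q} ≤ C'' s^{r + 1 - 2q}`. -/
theorem weighted_sum_polynomial_growth_estimate
    {Γ : Type*} [Countable Γ] (L : Γ → ℝ) (hL0 : ∀ u, 0 ≤ L u)
    (r C : ℝ) (hr : 0 ≤ r) (hC : 0 < C)
    (hgrowth : ∀ k : ℕ, ({u : Γ | L u ≤ k}).Finite ∧
      (Nat.card {u : Γ | L u ≤ (k : ℝ)} : ℝ) ≤ C * (1 + (k : ℝ)) ^ r)
    (q : ℝ) (hq : r + 1 < 2 * q) :
    ∃ C'' > (0:ℝ), ∀ s : ℝ, 1 ≤ s →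
      Summable (fun u : Γ => (1 + L u + s) ^ (-(2 * q))) ∧
      (∑' u : Γ, (1 + L u + s) ^ (-(2 * q))) ≤ C'' * s ^ (r + 1 - 2 * q) := by
  set α : ℝ := 2 * q - r with hαdef
  have hα1 : 1 < α := by simp only [hαdef]; linarith
  have hα1' : (0:ℝ) < α - 1 := by linarith
  have hK : (0:ℝ) < C * (1 + 1 / (α - 1)) := by positivity
  refine ⟨C * (1 + 1 / (α - 1)), hK, fun s hs => ?_⟩
  have hs0 : (0:ℝ) < s := lt_of_lt_of_le one_pos hs
  obtain ⟨hsum, htsum⟩ := shifted_rpow_sum_bound hα1 hs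
  have hnn : ∀ u : Γ, 0 ≤ (1 + L u + s) ^ (-(2 * q)) := fun u =>
    Real.rpow_nonneg (by nlinarith [hL0 u]) _
  have hfin : ∀ F : Finset Γ, ∑ u ∈ F, (1 + L u + s) ^ (-(2 * q))
      ≤ C * (1 + 1 / (α - 1)) * s ^ (r + 1 - 2 * q) := by
    intro F
    have hgnn : ∀ n : ℕ, 0 ≤ C * ((n : ℝ) + s) ^ (-α) := fun n => by positivity
    have key : ∀ n ∈ F.image (fun u => ⌈L u⌉₊),
        ∑ u ∈ F.filter (fun u => ⌈L u⌉₊ = n), (1 + L u + s) ^ (-(2 * q))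
          ≤ C * ((n : ℝ) + s) ^ (-α) := by
      intro n _
      have hterm : ∀ u ∈ F.filter (fun u => ⌈L u⌉₊ = n),
          (1 + L u + s) ^ (-(2 * q)) ≤ ((n : ℝ) + s) ^ (-(2 * q)) := by
        intro u hu
        rw [Finset.mem_filter] at hu
        have hceil : ((n : ℝ)) < L u + 1 := hu.2 ▸ Nat.ceil_lt_add_one (hL0 u)
        exact Real.rpow_le_rpow_of_nonpos (by positivity) (by linarith)
          (by linarith)
      have hcard : ((F.filter (fun u => ⌈L u⌉₊ = n)).card : ℝ) ≤ C * (1 + (n : ℝ)) ^ r := by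
        obtain ⟨hfinset, hcard⟩ := hgrowth n
        have hsub : F.filter (fun u => ⌈L u⌉₊ = n) ⊆ hfinset.toFinset := by
          intro u hu
          rw [Finset.mem_filter] at hu
          rw [Set.Finite.mem_toFinset]
          exact Nat.ceil_le.mp (le_of_eq hu.2)
        have : Nat.card {u : Γ | L u ≤ (n : ℝ)} = hfinset.toFinset.card := by
          rw [Nat.card_coe_set_eq, Set.ncard_eq_toFinset_card _ hfinset]
        calc ((F.filter (fun u => ⌈L u⌉₊ = n)).card : ℝ)
            ≤ (hfinset.toFinset.card : ℝ) := by exact_mod_cast Finset.card_le_card hsub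
          _ ≤ C * (1 + (n : ℝ)) ^ r := this ▸ hcard
      have hpow : (1 + (n : ℝ)) ^ r * ((n : ℝ) + s) ^ (-(2 * q)) ≤ ((n : ℝ) + s) ^ (-α) := by
        have h1 : (1 + (n : ℝ)) ^ r ≤ ((n : ℝ) + s) ^ r :=
          Real.rpow_le_rpow (by positivity) (by linarith) hr
        have h2 : ((n : ℝ) + s) ^ r * ((n : ℝ) + s) ^ (-(2 * q)) = ((n : ℝ) + s) ^ (-α) := by
          rw [← Real.rpow_add (by positivity)]
          congr 1
          simp only [hαdef]; ring
        calc (1 + (n : ℝ)) ^ r * ((n : ℝ) + s) ^ (-(2 * q))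
            ≤ ((n : ℝ) + s) ^ r * ((n : ℝ) + s) ^ (-(2 * q)) :=
              mul_le_mul_of_nonneg_right h1 (Real.rpow_nonneg (by positivity) _)
          _ = ((n : ℝ) + s) ^ (-α) := h2
      calc ∑ u ∈ F.filter (fun u => ⌈L u⌉₊ = n), (1 + L u + s) ^ (-(2 * q))
          ≤ (F.filter (fun u => ⌈L u⌉₊ = n)).card • ((n : ℝ) + s) ^ (-(2 * q)) :=
            Finset.sum_le_card_nsmul _ _ _ hterm
        _ = ((F.filter (fun u => ⌈L u⌉₊ = n)).card : ℝ) * ((n : ℝ) + s) ^ (-(2 * q)) := by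
            rw [nsmul_eq_mul]
        _ ≤ C * (1 + (n : ℝ)) ^ r * ((n : ℝ) + s) ^ (-(2 * q)) :=
            mul_le_mul_of_nonneg_right hcard (Real.rpow_nonneg (by positivity) _)
        _ = C * ((1 + (n : ℝ)) ^ r * ((n : ℝ) + s) ^ (-(2 * q))) := by ring
        _ ≤ C * ((n : ℝ) + s) ^ (-α) := mul_le_mul_of_nonneg_left hpow hC.le
    have hsum' : Summable (fun n : ℕ => C * ((n : ℝ) + s) ^ (-α)) := hsum.mul_left C
    calc ∑ u ∈ F, (1 + L u + s) ^ (-(2 * q))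
        = ∑ n ∈ F.image (fun u => ⌈L u⌉₊),
            ∑ u ∈ F.filter (fun u => ⌈L u⌉₊ = n), (1 + L u + s) ^ (-(2 * q)) :=
          (Finset.sum_fiberwise_of_maps_to (fun u hu => Finset.mem_image_of_mem _ hu) _).symm
      _ ≤ ∑ n ∈ F.image (fun u => ⌈L u⌉₊), C * ((n : ℝ) + s) ^ (-α) :=
          Finset.sum_le_sum key
      _ ≤ ∑' n : ℕ, C * ((n : ℝ) + s) ^ (-α) :=
          Summable.sum_le_tsum _ (fun n _ => hgnn n) hsum'
      _ = C * ∑' n : ℕ, ((n : ℝ) + s) ^ (-α) := tsum_mul_left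
      _ ≤ C * ((1 + 1 / (α - 1)) * s ^ (1 - α)) :=
          mul_le_mul_of_nonneg_left htsum hC.le
      _ = C * (1 + 1 / (α - 1)) * s ^ (r + 1 - 2 * q) := by
          rw [show (1:ℝ) - α = r + 1 - 2 * q by simp only [hαdef]; ring]; ring
  have hSummable : Summable (fun u : Γ => (1 + L u + s) ^ (-(2 * q))) :=
    summable_of_sum_le hnn hfin
  exact ⟨hSummable, Summable.tsum_le_of_sum_le hSummable hfin⟩
end
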